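/- Let G be a strongly connected balanced digraph with Laplacian L and resistance r_{ij} := l†_{ii} + l†_{jj} − 2 l†_{ij}, where L† = (l†_{ij}) is the Moore–Penrose inverse of L. Then for every pair of distinct vertices i, j: r_{ij} + r_{ji} = (2/κ(G)) · det(L[{i,j}ᶜ,{i,j}ᶜ]), where κ(G) is the common cofactor of L. -/

import Mathlib

/-!
Put `κ = det L[{j}ᶜ, {j}ᶜ]`. The kernels of `L` and `Lᵀ` consist of the constant vectors
(maximum principle along directed paths, applied to `G` and, by balance, to its reverse). Hence
`κ ≠ 0`, and the adjugate of `L` is constant, so `κ` does not depend on `j`. Cramer's rule on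
`L[{j}ᶜ, {j}ᶜ]` gives `x` with `L x = κ (eᵢ - eⱼ)` and `xᵢ - xⱼ = det L[{i,j}ᶜ, {i,j}ᶜ]`.
Since `L†L` is the orthogonal projection onto `𝟙ᗮ ∋ eᵢ - eⱼ`,
`κ (eᵢ - eⱼ)ᵀ L† (eᵢ - eⱼ) = (eᵢ - eⱼ)ᵀ L†L x = xᵢ - xⱼ`, and the left side is
`κ (r_ij + r_ji) / 2`.
-/

open Matrix Finset

/-- Out-degree of vertex `i` in the digraph with adjacency `A`. -/
def outdeg {n : ℕ} (A : Fin n → Fin n → Bool) (i : Fin n) : ℕ :=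
  (Finset.univ.filter (fun j => A i j = true)).card

/-- In-degree of vertex `i`. -/
def indeg {n : ℕ} (A : Fin n → Fin n → Bool) (i : Fin n) : ℕ :=
  (Finset.univ.filter (fun j => A j i = true)).card

/-- Laplacian matrix of a digraph: diagonal = out-degree, `-1` on edges, `0` otherwise. -/
def lap {n : ℕ} (A : Fin n → Fin n → Bool) : Matrix (Fin n) (Fin n) ℝ :=
  Matrix.of fun i j => if i = j then (outdeg A i : ℝ) else if A i j then -1 else 0

/-- Reachability by directed edges. -/
def Reach {n : ℕ} (A : Fin n → Fin n → Bool) : Fin n → Fin n → Prop :=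
  Relation.ReflTransGen (fun a b => A a b = true)

def StronglyConnected {n : ℕ} (A : Fin n → Fin n → Bool) : Prop := ∀ i j, Reach A i j

def IsBalanced {n : ℕ} (A : Fin n → Fin n → Bool) : Prop := ∀ i, indeg A i = outdeg A i

/-- In-degree of `v` in an edge set `T`. -/
def tIndeg {n : ℕ} (T : Finset (Fin n × Fin n)) (v : Fin n) : ℕ :=
  (T.filter (fun e => e.2 = v)).card

/-- Reachability using only the edges of `T`. -/
def ReachIn {n : ℕ} (T : Finset (Fin n × Fin n)) : Fin n → Fin n → Prop :=
  Relation.ReflTransGen (fun a b => (a, b) ∈ T)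

/-- Spanning tree of the digraph rooted at `i` (spanning arborescence, edges directed
away from `i`): every vertex other than `i` has in-degree 1, `i` has in-degree 0, and
every vertex is reachable from `i` (i.e. the subgraph is connected and acyclic). -/
def IsSpanningTree {n : ℕ} (A : Fin n → Fin n → Bool) (i : Fin n)
    (T : Finset (Fin n × Fin n)) : Prop :=
  (∀ e ∈ T, A e.1 e.2 = true) ∧ tIndeg T i = 0 ∧
    (∀ v, v ≠ i → tIndeg T v = 1) ∧ (∀ v, ReachIn T i v)

/-- Spanning forest with exactly two trees, rooted at `i` and `j`: two vertex-disjoint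
arborescences partitioning the vertex set, with roots `i` and `j`. -/
def IsTwoForest {n : ℕ} (A : Fin n → Fin n → Bool) (i j : Fin n)
    (T : Finset (Fin n × Fin n)) : Prop :=
  (∀ e ∈ T, A e.1 e.2 = true) ∧ tIndeg T i = 0 ∧ tIndeg T j = 0 ∧
    (∀ v, v ≠ i → v ≠ j → tIndeg T v = 1) ∧ (∀ v, ReachIn T i v ∨ ReachIn T j v)

/-- `det L[{i}ᶜ, {i}ᶜ]`: determinant of the principal submatrix deleting row/column `i`. -/
def minor1 {n : ℕ} (L : Matrix (Fin n) (Fin n) ℝ) (i : Fin n) : ℝ :=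
  (L.submatrix (fun a : {x : Fin n // x ≠ i} => (a : Fin n))
    (fun a : {x : Fin n // x ≠ i} => (a : Fin n))).det

/-- `det L[{i,j}ᶜ, {i,j}ᶜ]`: determinant of the principal submatrix deleting rows and
columns `i` and `j`. -/
def minor2 {n : ℕ} (L : Matrix (Fin n) (Fin n) ℝ) (i j : Fin n) : ℝ :=
  (L.submatrix (fun a : {x : Fin n // x ≠ i ∧ x ≠ j} => (a : Fin n))
    (fun a : {x : Fin n // x ≠ i ∧ x ≠ j} => (a : Fin n))).det

/-- `M` is the Moore–Penrose inverse of `L` (the four Penrose equations). -/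
def IsMoorePenrose {n : ℕ} (L M : Matrix (Fin n) (Fin n) ℝ) : Prop :=
  L * M * L = L ∧ M * L * M = M ∧ (L * M)ᵀ = L * M ∧ (M * L)ᵀ = M * L

/-- Resistance `r_{ij} = l†_{ii} + l†_{jj} - 2 l†_{ij}` computed from `M = L†`. -/
def resist {n : ℕ} (M : Matrix (Fin n) (Fin n) ℝ) (i j : Fin n) : ℝ :=
  M i i + M j j - 2 * M i j

/-- Directed path from `i` to `j`: a list of distinct vertices starting at `i`, ending at
`j`, consecutive ones joined by directed edges. -/
def IsPath {n : ℕ} (A : Fin n → Fin n → Bool) (i j : Fin n) (p : List (Fin n)) : Prop :=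
  p.Chain' (fun a b => A a b = true) ∧ p.head? = some i ∧ p.getLast? = some j ∧ p.Nodup

/-- `s` is the edge set of a directed cycle of the digraph: the cyclically consecutive
pairs of a nonempty duplicate-free vertex list, all being directed edges. -/
def IsCycle {n : ℕ} (A : Fin n → Fin n → Bool) (s : Finset (Fin n × Fin n)) : Prop :=
  ∃ c : List (Fin n), 2 ≤ c.length ∧ c.Nodup ∧
    (∀ p ∈ c.zip (c.rotate 1), A p.1 p.2 = true) ∧ s = (c.zip (c.rotate 1)).toFinset

/-- Vertex set of a cycle given by its edge set. -/
def cycVerts {n : ℕ} (s : Finset (Fin n × Fin n)) : Finset (Fin n) := s.image Prod.fst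

/-- Directed cactus: strongly connected and every directed edge lies in exactly one
directed cycle. -/
def IsCactus {n : ℕ} (A : Fin n → Fin n → Bool) : Prop :=
  StronglyConnected A ∧
    ∀ i j : Fin n, A i j = true → ∃! s : Finset (Fin n × Fin n), IsCycle A s ∧ (i, j) ∈ s

/-- Classical distance: length (number of edges) of a shortest directed path. -/
noncomputable def pdist {n : ℕ} (A : Fin n → Fin n → Bool) (i j : Fin n) : ℕ :=
  sInf {m : ℕ | ∃ p : List (Fin n), IsPath A i j p ∧ p.length = m + 1}

namespace Matrix

variable {ι R : Type*} [Fintype ι]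

def deleteRowCol (L : Matrix ι ι R) (k : ι) : Matrix {a // a ≠ k} {a // a ≠ k} R :=
  L.submatrix (↑) (↑)

theorem apply_eq_of_mulVec_eq_zero_of_forall_le [Field R] [LinearOrder R]
    [IsStrictOrderedRing R] {L : Matrix ι ι R} (hoff : ∀ a b, a ≠ b → L a b ≤ 0)
    (hrow : L *ᵥ 1 = 0) {x : ι → R} (hx : L *ᵥ x = 0) {p : ι} (hp : ∀ z, x z ≤ x p) {b : ι}
    (hb : L p b ≠ 0) : x b = x p := by
  have hsum : ∑ c, L p c * (x c - x p) = 0 := by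
    have hxp := congrFun hx p
    have hrowp := congrFun hrow p
    simp only [mulVec, dotProduct, Pi.one_apply, mul_one, Pi.zero_apply] at hxp hrowp
    simp [mul_sub, Finset.sum_sub_distrib, hxp, ← Finset.sum_mul, hrowp]
  have hnonneg : ∀ c ∈ Finset.univ, 0 ≤ L p c * (x c - x p) := by
    intro c _
    rcases eq_or_ne p c with rfl | hpc
    · simp
    · exact mul_nonneg_of_nonpos_of_nonpos (hoff p c hpc) (sub_nonpos.2 (hp c))
  have hterm := (Finset.sum_eq_zero_iff_of_nonneg hnonneg).1 hsum b (Finset.mem_univ b)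
  exact sub_eq_zero.1 ((mul_eq_zero.1 hterm).resolve_left hb)

section CommRing

variable [DecidableEq ι] [CommRing R] {L : Matrix ι ι R}

theorem adjugate_apply_self (L : Matrix ι ι R) (i : ι) :
    L.adjugate i i = (L.deleteRowCol i).det := by
  let e : {x // x = i} ⊕ {x // x ≠ i} ≃ ι := Equiv.sumCompl (· = i)
  have hblock : (L.updateRow i (Pi.single i 1)).submatrix e e =
      fromBlocks 1 0 (L.submatrix (↑) (↑)) (L.deleteRowCol i) := by
    ext (⟨a, rfl⟩ | ⟨a, ha⟩) (⟨b, hb⟩ | ⟨b, hb⟩) <;> simp [e, deleteRowCol, updateRow_apply, *]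
  rw [adjugate_apply, ← det_submatrix_equiv_self e, hblock, det_fromBlocks_zero₁₂, det_one,
    one_mul]

theorem adjugate_apply_eq_of_det_eq_zero (hdet : L.det = 0)
    (hker : ∀ x, L *ᵥ x = 0 → ∀ a b, x a = x b) (a b c : ι) :
    L.adjugate a c = L.adjugate b c := by
  refine hker (fun r => L.adjugate r c) ?_ a b
  ext r
  simpa [hdet, mul_apply, mulVec, dotProduct] using congrFun (congrFun (mul_adjugate L) r) c

theorem mulVec_apply_eq_neg_sum_ne (hcol : 1 ᵥ* L = 0) (x : ι → R) (k : ι) :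
    (L *ᵥ x) k = -∑ a : {a // a ≠ k}, (L *ᵥ x) a := by
  have htot : ∑ a, (L *ᵥ x) a = 0 := by
    simpa [dotProduct_mulVec, hcol] using (one_dotProduct (L *ᵥ x)).symm
  rw [Fintype.sum_eq_add_sum_subtype_ne _ k] at htot
  exact eq_neg_of_add_eq_zero_left htot

theorem mulVec_extend_apply (L : Matrix ι ι R) {k : ι} (y : {a // a ≠ k} → R)
    (a : {a // a ≠ k}) : (L *ᵥ Function.extend (↑) y 0) a = (L.deleteRowCol k *ᵥ y) a := by
  have hk : Function.extend ((↑) : {a // a ≠ k} → ι) y 0 k = 0 :=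
    Function.extend_apply' _ _ _ fun ⟨b, hb⟩ => b.2 hb
  simp only [mulVec, dotProduct]
  rw [Fintype.sum_eq_add_sum_subtype_ne _ k, hk, mul_zero, zero_add]
  simp only [Subtype.val_injective.extend_apply, deleteRowCol, submatrix_apply]

/-- Cramer's rule on `L[{j}ᶜ, {j}ᶜ]`: `x` is column `i` of its adjugate, extended by `0` at `j`;
the zero column sums of `L` then force `(L x) j`. -/
theorem exists_mulVec_eq_smul_single_sub_single (hcol : 1 ᵥ* L = 0) {i j : ι} (hij : i ≠ j) :
    ∃ x : ι → R, L *ᵥ x = (L.deleteRowCol j).det • (Pi.single i 1 - Pi.single j 1) ∧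
      x i - x j = (L.deleteRowCol j).adjugate ⟨i, hij⟩ ⟨i, hij⟩ := by
  set y : {a // a ≠ j} → R := fun a => (L.deleteRowCol j).adjugate a ⟨i, hij⟩
  have hy : ∀ a : {a // a ≠ j}, (L.deleteRowCol j *ᵥ y) a =
      (L.deleteRowCol j).det * (Pi.single i 1 - Pi.single j 1 : ι → R) a := by
    intro a
    have hcramer := congrFun (congrFun (mul_adjugate (L.deleteRowCol j)) a) ⟨i, hij⟩
    simp only [mul_apply, smul_apply, one_apply, Subtype.ext_iff, smul_eq_mul] at hcramer
    simp [mulVec, dotProduct, y, hcramer, Pi.single_apply, a.2]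
  refine ⟨Function.extend (↑) y 0, ?_, ?_⟩
  · ext a
    rcases eq_or_ne a j with rfl | ha
    · have hsum :=
        Fintype.sum_eq_add_sum_subtype_ne (Pi.single i 1 - Pi.single a 1 : ι → R) a
      simp only [Finset.sum_sub_distrib, Finset.sum_pi_single', Finset.mem_univ, if_true,
        Pi.sub_apply, Pi.single_eq_same, Pi.single_eq_of_ne hij.symm, sub_self] at hsum
      rw [mulVec_apply_eq_neg_sum_ne hcol]
      simp only [mulVec_extend_apply, hy, ← Finset.mul_sum, Finset.sum_sub_distrib,
        Pi.smul_apply, Pi.sub_apply, Pi.single_eq_same, Pi.single_eq_of_ne hij.symm, smul_eq_mul]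
      linear_combination (L.deleteRowCol a).det * hsum
    · exact (mulVec_extend_apply L y ⟨a, ha⟩).trans (hy ⟨a, ha⟩)
  · rw [Subtype.val_injective.extend_apply (f := ((↑) : {a // a ≠ j} → ι)) y 0 ⟨i, hij⟩,
      Function.extend_apply' _ _ _ fun ⟨b, hb⟩ => b.2 hb]
    simp [y]

end CommRing

theorem det_deleteRowCol_ne_zero [DecidableEq ι] [Field R] {L : Matrix ι ι R}
    (hcol : 1 ᵥ* L = 0) (hker : ∀ x, L *ᵥ x = 0 → ∀ a b, x a = x b) (k : ι) :
    (L.deleteRowCol k).det ≠ 0 := by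
  intro hdet
  obtain ⟨v, hv0, hv⟩ := exists_mulVec_eq_zero_iff.2 hdet
  set x : ι → R := Function.extend (↑) v 0
  have hxk : x k = 0 := Function.extend_apply' _ _ _ fun ⟨b, hb⟩ => b.2 hb
  have hLx_ne : ∀ a : {a // a ≠ k}, (L *ᵥ x) a = 0 := fun a => by
    rw [mulVec_extend_apply, hv, Pi.zero_apply]
  have hLx : L *ᵥ x = 0 := by
    ext a
    rcases eq_or_ne a k with rfl | ha
    · rw [mulVec_apply_eq_neg_sum_ne hcol, Finset.sum_eq_zero fun b _ => hLx_ne b, neg_zero,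
        Pi.zero_apply]
    · exact hLx_ne ⟨a, ha⟩
  refine hv0 (funext fun a => ?_)
  have hxv : x a = v a := Subtype.val_injective.extend_apply v 0 a
  rw [← hxv, hker x hLx a k, hxk, Pi.zero_apply]

section MoorePenrose

variable [Field R] [CharZero R] {L M : Matrix ι ι R}

theorem mul_mulVec_eq_self_of_sum_eq_zero (hLML : L * M * L = L) (hsymm : (M * L)ᵀ = M * L)
    (hrow : L *ᵥ 1 = 0) (hker : ∀ x, L *ᵥ x = 0 → ∀ a b, x a = x b) {v : ι → R}
    (hv : ∑ a, v a = 0) : (M * L) *ᵥ v = v := by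
  -- `v - (M L) v` lies in the kernel of `L`, so it is constant; its sum vanishes as `M L` is
  -- symmetric and kills `1`.
  set d := v - (M * L) *ᵥ v
  have hLd : L *ᵥ d = 0 := by
    rw [mulVec_sub, mulVec_mulVec, ← Matrix.mul_assoc, hLML, sub_self]
  have hone : 1 ᵥ* (M * L) = 0 := by
    rw [← hsymm, vecMul_transpose, ← mulVec_mulVec, hrow, mulVec_zero]
  have hd : ∑ a, d a = 0 := by
    rw [← one_dotProduct, dotProduct_sub, dotProduct_mulVec, hone, zero_dotProduct,
      one_dotProduct, hv, sub_zero]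
  ext a
  have hconst : d = fun _ => d a := funext fun b => hker d hLd b a
  rw [hconst, Finset.sum_const, Finset.card_univ, nsmul_eq_mul, mul_eq_zero, Nat.cast_eq_zero,
    Fintype.card_eq_zero_iff] at hd
  rcases hd with hempty | hda
  · exact isEmptyElim a
  · exact (sub_eq_zero.1 hda).symm

theorem mul_dotProduct_mulVec_eq_dotProduct (hLML : L * M * L = L) (hsymm : (M * L)ᵀ = M * L)
    (hrow : L *ᵥ 1 = 0) (hker : ∀ x, L *ᵥ x = 0 → ∀ a b, x a = x b) {v x : ι → R}
    (hv : ∑ a, v a = 0) {c : R} (hx : L *ᵥ x = c • v) : c * (v ⬝ᵥ M *ᵥ v) = v ⬝ᵥ x :=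
  calc c * (v ⬝ᵥ M *ᵥ v) = v ⬝ᵥ (M * L) *ᵥ x := by
        rw [← mulVec_mulVec, hx, mulVec_smul, dotProduct_smul, smul_eq_mul]
    _ = ((M * L) *ᵥ v) ⬝ᵥ x := by
        rw [dotProduct_mulVec, ← mulVec_transpose, hsymm]
    _ = v ⬝ᵥ x := by rw [mul_mulVec_eq_self_of_sum_eq_zero hLML hsymm hrow hker hv]

end MoorePenrose

end Matrix

section Laplacian

variable {n : ℕ} {A : Fin n → Fin n → Bool}

lemma lap_apply (hA : ∀ i, A i i = false) (a b : Fin n) :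
    lap A a b = (if a = b then (outdeg A a : ℝ) else 0) - if A a b then 1 else 0 := by
  by_cases h : a = b
  · subst h; simp [lap, hA]
  · simp only [lap, of_apply, h, if_false]
    split_ifs <;> simp

lemma lap_mulVec_one (hA : ∀ i, A i i = false) : lap A *ᵥ 1 = 0 := by
  ext a
  simp [mulVec, dotProduct, lap_apply hA, Finset.sum_sub_distrib, Finset.sum_boole, outdeg]

lemma transpose_lap (hbal : IsBalanced A) : (lap A)ᵀ = lap (fun a b => A b a) := by
  ext a b
  rcases eq_or_ne a b with rfl | h
  · simpa [lap, outdeg, indeg] using (hbal a).symm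
  · simp [lap, h, h.symm]

lemma one_vecMul_lap (hA : ∀ i, A i i = false) (hbal : IsBalanced A) : 1 ᵥ* lap A = 0 := by
  rw [← transpose_transpose (lap A), vecMul_transpose, transpose_lap hbal,
    lap_mulVec_one (A := fun a b => A b a) hA]

lemma StronglyConnected.reverse (hsc : StronglyConnected A) :
    StronglyConnected (fun a b => A b a) :=
  fun a b => Relation.reflTransGen_swap.2 (hsc b a)

lemma eq_of_lap_mulVec_eq_zero (hA : ∀ i, A i i = false) (hsc : StronglyConnected A)
    {x : Fin n → ℝ} (hx : lap A *ᵥ x = 0) (a b : Fin n) : x a = x b := by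
  have : Nonempty (Fin n) := ⟨a⟩
  obtain ⟨m, hm⟩ := Finite.exists_max x
  have hoff : ∀ a b, a ≠ b → lap A a b ≤ 0 := by
    intro a b h
    rw [lap_apply hA, if_neg h]
    split_ifs <;> norm_num
  have hreach : ∀ v, Reach A m v → x v = x m := by
    intro v hv
    induction hv with
    | refl => rfl
    | @tail c d _ hcd ih =>
      have hne : c ≠ d := by rintro rfl; simp [hA] at hcd
      rw [← ih]
      refine apply_eq_of_mulVec_eq_zero_of_forall_le hoff (lap_mulVec_one hA) hx
        (fun z => ih ▸ hm z) ?_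
      simp [lap_apply hA, hne, hcd]
  rw [hreach a (hsc m a), hreach b (hsc m b)]

lemma det_lap_eq_zero [NeZero n] (hA : ∀ i, A i i = false) : (lap A).det = 0 :=
  exists_mulVec_eq_zero_iff.1 ⟨1, one_ne_zero, lap_mulVec_one hA⟩

lemma minor1_eq_det_deleteRowCol (L : Matrix (Fin n) (Fin n) ℝ) (k : Fin n) :
    minor1 L k = (L.deleteRowCol k).det :=
  rfl

lemma minor2_eq_adjugate_deleteRowCol (L : Matrix (Fin n) (Fin n) ℝ) {i j : Fin n}
    (hij : i ≠ j) : minor2 L i j = (L.deleteRowCol j).adjugate ⟨i, hij⟩ ⟨i, hij⟩ := by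
  let e : {x // x ≠ i ∧ x ≠ j} ≃ {z : {x // x ≠ j} // z ≠ ⟨i, hij⟩} :=
    { toFun := fun a => ⟨⟨a, a.2.2⟩, fun h => a.2.1 (congrArg Subtype.val h)⟩
      invFun := fun z => ⟨z, fun h => z.2 (Subtype.ext h), z.1.2⟩
      left_inv := fun _ => rfl
      right_inv := fun _ => rfl }
  rw [adjugate_apply_self, ← det_submatrix_equiv_self e]
  rfl

lemma minor1_lap_eq (hA : ∀ i, A i i = false) (hsc : StronglyConnected A)
    (hbal : IsBalanced A) (k k' : Fin n) : minor1 (lap A) k = minor1 (lap A) k' := by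
  have : NeZero n := ⟨k.pos.ne'⟩
  have hcol := adjugate_apply_eq_of_det_eq_zero (det_lap_eq_zero hA)
    fun _ hx => eq_of_lap_mulVec_eq_zero hA hsc hx
  have hrow := adjugate_apply_eq_of_det_eq_zero (L := (lap A)ᵀ)
    (by rw [det_transpose, det_lap_eq_zero hA])
    fun _ hx => eq_of_lap_mulVec_eq_zero (A := fun a b => A b a) hA hsc.reverse
      (transpose_lap hbal ▸ hx)
  rw [minor1_eq_det_deleteRowCol, minor1_eq_det_deleteRowCol, ← adjugate_apply_self,
    ← adjugate_apply_self, hcol k k' k, ← transpose_apply (adjugate _), adjugate_transpose,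
    hrow k k' k', ← adjugate_transpose, transpose_apply]

end Laplacian

/-- `r_{ij} + r_{ji} = (2/κ(G)) det L[{i,j}ᶜ,{i,j}ᶜ]`. -/
theorem stmt_6 {n : ℕ} (A : Fin n → Fin n → Bool) (hA : ∀ i, A i i = false)
    (hsc : StronglyConnected A) (hbal : IsBalanced A)
    (M : Matrix (Fin n) (Fin n) ℝ) (hM : IsMoorePenrose (lap A) M)
    (i j : Fin n) (hij : i ≠ j) :
    ∀ k : Fin n,
      resist M i j + resist M j i = 2 / minor1 (lap A) k * minor2 (lap A) i j := by
  intro k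
  obtain ⟨hLML, -, -, hsymm⟩ := hM
  have hker : ∀ x, lap A *ᵥ x = 0 → ∀ a b, x a = x b :=
    fun _ hx => eq_of_lap_mulVec_eq_zero hA hsc hx
  have hcol := one_vecMul_lap hA hbal
  have hκ : minor1 (lap A) j ≠ 0 := det_deleteRowCol_ne_zero hcol hker j
  obtain ⟨x, hx, hxij⟩ := exists_mulVec_eq_smul_single_sub_single hcol hij
  have hv : ∑ a, (Pi.single i 1 - Pi.single j 1 : Fin n → ℝ) a = 0 := by
    simp [Finset.sum_sub_distrib]
  have key := mul_dotProduct_mulVec_eq_dotProduct hLML hsymm (lap_mulVec_one hA) hker hv hx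
  simp only [sub_dotProduct, dotProduct_sub, mulVec_sub, single_one_dotProduct, mulVec_single_one,
    col_apply,
    ← minor1_eq_det_deleteRowCol] at key
  rw [minor1_lap_eq hA hsc hbal k j, minor2_eq_adjugate_deleteRowCol _ hij, ← hxij, ← key,
    resist, resist]
  field_simp
  ring
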